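/- arXiv:2301.04112 — 2 statements merged into one kernel-verified Lean document; each statement's English description precedes it below -/
import Mathlib

section
/- Let p ∈ (0,1) and let J(p) be the disorder perturbed by a perturbation of the first kind, J_e(p) = (1−p)J_e + √(2p−p²)·J'_e. Let σ be a ground state for J, σ(p) a ground state for J(p), and let A be the set of sites where σ and σ(p) disagree. If ∂A ≠ ∅, then almost surely Δ(A)/|∂A| ≤ (2√(2p−p²)/(1−p)) · max_{e∈E} |J'_e|, where Δ(A) := H_J(σ(p)) − H_J(σ) is the energy cost of overturning the spins of σ in A. -/
open MeasureTheory ProbabilityTheory Real Finset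

namespace EA

/-- Environments: edge weights indexed by unordered pairs of vertices. -/
abbrev Env (V : Type) := Sym2 V → ℝ

/-- The product `σ i * σ j` over an unordered pair `{i, j}`. -/
def spinProd {V : Type} (σ : V → ℝ) : Sym2 V → ℝ :=
  Sym2.lift ⟨fun i j => σ i * σ j, fun _ _ => mul_comm _ _⟩

/-- The Edwards–Anderson Hamiltonian. -/
noncomputable def ham {V : Type} [Fintype V] [DecidableEq V]
    (G : SimpleGraph V) [DecidableRel G.Adj] (J : Env V) (σ : V → ℝ) : ℝ :=
  -∑ e ∈ G.edgeFinset, J e * spinProd σ e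

/-- Spin configurations take values ±1. -/
def IsConfig {V : Type} (σ : V → ℝ) : Prop := ∀ i, σ i = 1 ∨ σ i = -1

/-- Satisfying the boundary condition `γ` on `B`. -/
def SatisfiesBC {V : Type} (B : Finset V) (γ : V → ℝ) (σ : V → ℝ) : Prop :=
  ∀ i ∈ B, σ i = γ i

/-- Ground state: minimizer of the Hamiltonian under the boundary condition. -/
def IsGroundState {V : Type} [Fintype V] [DecidableEq V]
    (G : SimpleGraph V) [DecidableRel G.Adj] (B : Finset V) (γ : V → ℝ)
    (J : Env V) (σ : V → ℝ) : Prop :=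
  IsConfig σ ∧ SatisfiesBC B γ σ ∧
    ∀ τ : V → ℝ, IsConfig τ → SatisfiesBC B γ τ → ham G J σ ≤ ham G J τ

/-- i.i.d. standard Gaussian environment. -/
noncomputable def gaussEnv (V : Type) [Fintype V] [DecidableEq V] : Measure (Env V) :=
  Measure.pi fun _ : Sym2 V => gaussianReal 0 1

instance (V : Type) [Fintype V] [DecidableEq V] : IsProbabilityMeasure (gaussEnv V) := by
  unfold gaussEnv; infer_instance

/-- Bernoulli(p) measure on `Bool`. -/
noncomputable def bern (p : ℝ) : Measure Bool :=
  (PMF.bernoulli (min (Real.toNNReal p) 1) (min_le_right _ _)).toMeasure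

instance (p : ℝ) : IsProbabilityMeasure (bern p) := by
  unfold bern; infer_instance

/-- Joint law of `(J, J', coin flips)`. -/
noncomputable def μ3 (V : Type) [Fintype V] [DecidableEq V] (p : ℝ) :
    Measure (Env V × Env V × (Sym2 V → Bool)) :=
  (gaussEnv V).prod ((gaussEnv V).prod (Measure.pi fun _ : Sym2 V => bern p))

/-- Joint law of `(J, J')`. -/
noncomputable def μ2 (V : Type) [Fintype V] [DecidableEq V] : Measure (Env V × Env V) :=
  (gaussEnv V).prod (gaussEnv V)

/-- Perturbation of the first kind. -/
noncomputable def perturb1 {V : Type} (p : ℝ) (J J' : Env V) : Env V :=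
  fun e => (1 - p) * J e + Real.sqrt (2 * p - p ^ 2) * J' e

/-- Perturbation of the second kind. -/
def perturb2 {V : Type} (J J' : Env V) (ε : Sym2 V → Bool) : Env V :=
  fun e => if ε e then J' e else J e

/-- Site overlap over interior vertices. -/
noncomputable def overlap {V : Type} [Fintype V] [DecidableEq V]
    (B : Finset V) (σ τ : V → ℝ) : ℝ :=
  (∑ i ∈ univ \ B, σ i * τ i) / (univ \ B).card

/-- `min{d(i,j), d(i,B)+d(j,B)}` (the latter term omitted when `B = ∅`). -/
noncomputable def minDist {V : Type} (G : SimpleGraph V) (B : Finset V) (i j : V) : ℕ :=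
  if h : B.Nonempty then
    min (G.dist i j) ((B.inf' h fun k => G.dist i k) + B.inf' h fun k => G.dist j k)
  else G.dist i j


lemma spinProd_mk {V : Type} (σ : V → ℝ) (i j : V) :
    spinProd σ s(i, j) = σ i * σ j := rfl

lemma ham_perturb1 {V : Type} [Fintype V] [DecidableEq V]
    (G : SimpleGraph V) [DecidableRel G.Adj] (p : ℝ) (J J' : Env V) (τ : V → ℝ) :
    ham G (perturb1 p J J') τ
      = (1 - p) * ham G J τ + Real.sqrt (2 * p - p ^ 2) * ham G J' τ := by
  simp only [ham, perturb1, mul_neg, ← neg_add, neg_inj, Finset.mul_sum,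
    ← Finset.sum_add_distrib]
  exact Finset.sum_congr rfl fun e _ => by ring


open Classical in
/-- Edge boundary of `A`: edges with one endpoint in `A` and the other outside. -/
noncomputable def edgeBdry {V : Type} [Fintype V] [DecidableEq V]
    (G : SimpleGraph V) [DecidableRel G.Adj] (A : Finset V) : Finset (Sym2 V) :=
  G.edgeFinset.filter fun e => ∃ i ∈ e, ∃ j ∈ e, i ∈ A ∧ j ∉ A

/-- Flip the spins on `A`. -/
def flipOn {V : Type} [DecidableEq V] (A : Finset V) (σ : V → ℝ) : V → ℝ :=
  fun i => if i ∈ A then -σ i else σ i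


/-- inequality (2.8) of the paper: the interface energy per boundary
edge of the overturned region is at most `2√(2p-p²)/(1-p) · max_e |J'_e|`. -/
theorem interface_energy_per_boundary_edge (V : Type) [Fintype V] [DecidableEq V]
    (G : SimpleGraph V) [DecidableRel G.Adj] (B : Finset V) (γ : V → ℝ)
    (hconn : G.Connected) (hE : 2 ≤ G.edgeFinset.card) (hVo : (univ \ B).Nonempty)
    (hVoconn : (G.induce ((univ \ B : Finset V) : Set V)).Connected)
    (hne : G.edgeFinset.Nonempty)
    (p : ℝ) (hp : p ∈ Set.Ioo (0 : ℝ) 1) (J J' : Env V) (σ σp : V → ℝ)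
    (hσ : IsGroundState G B γ J σ) (hσp : IsGroundState G B γ (perturb1 p J J') σp)
    (hbdry : (edgeBdry G (univ.filter fun i => σ i ≠ σp i)).Nonempty) :
    (ham G J σp - ham G J σ) /
        ((edgeBdry G (univ.filter fun i => σ i ≠ σp i)).card : ℝ) ≤
      2 * Real.sqrt (2 * p - p ^ 2) / (1 - p) *
        (G.edgeFinset.sup' hne fun e => |J' e|) := by
  classical
  obtain ⟨hσc, hσb, hσmin⟩ := hσ
  obtain ⟨hσpc, hσpb, hσpmin⟩ := hσp
  obtain ⟨hp0, hp1⟩ := hp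
  set s : ℝ := Real.sqrt (2 * p - p ^ 2) with hs
  set A : Finset V := univ.filter fun i => σ i ≠ σp i with hA
  set D : Finset (Sym2 V) := edgeBdry G A with hD
  set M : ℝ := G.edgeFinset.sup' hne fun e => |J' e| with hM
  have hsnn : 0 ≤ s := Real.sqrt_nonneg _
  have h1p : (0:ℝ) < 1 - p := by linarith
  -- ground state inequality for perturbed Hamiltonian
  have h1 : ham G (perturb1 p J J') σp ≤ ham G (perturb1 p J J') σ :=
    hσpmin σ hσc hσb
  rw [ham_perturb1, ham_perturb1] at h1
  -- key: (1-p) * Δ ≤ s * (ham J' σ - ham J' σp)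
  have h2 : (1 - p) * (ham G J σp - ham G J σ)
      ≤ s * (ham G J' σ - ham G J' σp) := by nlinarith [h1]
  -- off the boundary, spin products agree
  have hoff : ∀ e ∈ G.edgeFinset, e ∉ D → spinProd σ e = spinProd σp e := by
    intro e he heD
    induction e using Sym2.inductionOn with
    | hf i j =>
      rw [spinProd_mk, spinProd_mk]
      by_cases hi : σ i = σp i
      · by_cases hj : σ j = σp j
        · rw [hi, hj]
        · exfalso
          apply heD
          rw [hD, edgeBdry, Finset.mem_filter]
          refine ⟨he, j, ?_, i, ?_, ?_, ?_⟩ <;>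
            simp [hA, hi, hj, Sym2.mem_iff]
      · by_cases hj : σ j = σp j
        · exfalso
          apply heD
          rw [hD, edgeBdry, Finset.mem_filter]
          refine ⟨he, i, ?_, j, ?_, ?_, ?_⟩ <;>
            simp [hA, hi, hj, Sym2.mem_iff]
        · have hi' : σ i = -σp i := by
            rcases hσc i with h | h <;> rcases hσpc i with h' | h' <;>
              simp [h, h'] at hi ⊢
          have hj' : σ j = -σp j := by
            rcases hσc j with h | h <;> rcases hσpc j with h' | h' <;>
              simp [h, h'] at hj ⊢
          rw [hi', hj']; ring
  -- rewrite energy difference as a sum over the boundary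
  have hDsub : D ⊆ G.edgeFinset := Finset.filter_subset _ _
  have h3 : ham G J' σ - ham G J' σp
      = ∑ e ∈ D, J' e * (spinProd σp e - spinProd σ e) := by
    have : ham G J' σ - ham G J' σp
        = ∑ e ∈ G.edgeFinset, J' e * (spinProd σp e - spinProd σ e) := by
      simp only [ham, neg_sub_neg, ← Finset.sum_sub_distrib]
      exact Finset.sum_congr rfl fun e _ => by ring
    rw [this]
    refine (Finset.sum_subset hDsub fun e he heD => ?_).symm
    rw [hoff e he heD]; ring
  -- bound each boundary term by 2M
  have habs : ∀ e ∈ D, J' e * (spinProd σp e - spinProd σ e) ≤ 2 * M := by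
    intro e heD
    have heE : e ∈ G.edgeFinset := hDsub heD
    have hMle : |J' e| ≤ M := Finset.le_sup' (fun e => |J' e|) heE
    have hsp : ∀ τ : V → ℝ, IsConfig τ → |spinProd τ e| = 1 := by
      intro τ hτ
      induction e using Sym2.inductionOn with
      | hf i j =>
        rw [spinProd_mk, abs_mul]
        rcases hτ i with h | h <;> rcases hτ j with h' | h' <;>
          simp [h, h']
    have hd : |spinProd σp e - spinProd σ e| ≤ 2 := by
      have := hsp σ hσc
      have := hsp σp hσpc
      calc |spinProd σp e - spinProd σ e|
          ≤ |spinProd σp e| + |spinProd σ e| := abs_sub _ _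
        _ ≤ 2 := by rw [hsp σ hσc, hsp σp hσpc]; norm_num
    calc J' e * (spinProd σp e - spinProd σ e)
        ≤ |J' e * (spinProd σp e - spinProd σ e)| := le_abs_self _
      _ = |J' e| * |spinProd σp e - spinProd σ e| := abs_mul _ _
      _ ≤ M * 2 := mul_le_mul hMle hd (abs_nonneg _)
          (le_trans (abs_nonneg _) hMle)
      _ = 2 * M := by ring
  have h4 : ham G J' σ - ham G J' σp ≤ (D.card : ℝ) * (2 * M) := by
    rw [h3]
    calc ∑ e ∈ D, J' e * (spinProd σp e - spinProd σ e)
        ≤ ∑ _e ∈ D, 2 * M := Finset.sum_le_sum habs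
      _ = (D.card : ℝ) * (2 * M) := by
          rw [Finset.sum_const, nsmul_eq_mul]
  have hMnn : 0 ≤ M := le_trans (abs_nonneg (J' hne.choose))
    (Finset.le_sup' (fun e => |J' e|) hne.choose_spec)
  have hcard : (0:ℝ) < (D.card : ℝ) := by
    exact_mod_cast Finset.card_pos.mpr hbdry
  rw [div_le_iff₀ hcard]
  have h5 : (1 - p) * (ham G J σp - ham G J σ) ≤ s * ((D.card : ℝ) * (2 * M)) :=
    le_trans h2 (mul_le_mul_of_nonneg_left h4 hsnn)
  have h6 : ham G J σp - ham G J σ ≤ s * ((D.card : ℝ) * (2 * M)) / (1 - p) :=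
    (le_div_iff₀ h1p).mpr (by linarith)
  refine h6.trans (le_of_eq ?_)
  field_simp


end EA
end

section
/- Say two edges of G are neighbors if they share an endpoint, and for an edge e let S_e := ∑ |J_f| over all edges f that are neighbors of e; call e special if J_e > S_e + 2. Let A ⊆ V° and let K ⊆ ∂A be a set of edges such that no two edges of K are neighbors of each other or have a common neighboring edge. If X is the number of special edges in K, then Δ(A) ≥ 2X, where Δ(A) is the energy cost of overturning all spins of the ground state in A. -/
open MeasureTheory ProbabilityTheory Real Finset

namespace EA

/-- Two edges are neighbours: distinct and sharing an endpoint. -/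
def edgeNbr {V : Type} (e f : Sym2 V) : Prop := e ≠ f ∧ ∃ v, v ∈ e ∧ v ∈ f


section Aux

variable {V : Type} [Fintype V] [DecidableEq V]

lemma isConfig_flipOn (A : Finset V) {σ : V → ℝ} (h : IsConfig σ) :
    IsConfig (flipOn A σ) := by
  intro i; rcases h i with h1 | h1 <;> unfold flipOn <;> split <;> simp [h1]

lemma satisfiesBC_flipOn {B W : Finset V} {γ σ : V → ℝ} (hW : W ⊆ univ \ B)
    (h : SatisfiesBC B γ σ) : SatisfiesBC B γ (flipOn W σ) := by
  intro i hi
  have hiW : i ∉ W := by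
    intro hiW
    have := hW hiW
    simp only [Finset.mem_sdiff] at this
    exact this.2 hi
  simp [flipOn, hiW, h i hi]

lemma spinProd_pm {σ : V → ℝ} (h : IsConfig σ) (e : Sym2 V) :
    spinProd σ e = 1 ∨ spinProd σ e = -1 := by
  induction e using Sym2.inductionOn with
  | hf a b => rcases h a with h1 | h1 <;> rcases h b with h2 | h2 <;> simp [spinProd, h1, h2]

open Classical in
lemma mem_edgeBdry_iff (G : SimpleGraph V) [DecidableRel G.Adj] (W : Finset V)
    {a b : V} (he : s(a, b) ∈ G.edgeFinset) :
    s(a, b) ∈ edgeBdry G W ↔ ((a ∈ W ∧ b ∉ W) ∨ (b ∈ W ∧ a ∉ W)) := by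
  unfold edgeBdry
  simp only [Finset.mem_filter, he, true_and, Sym2.mem_iff]
  constructor
  · rintro ⟨i, hi, j, hj, hiW, hjW⟩
    rcases hi with rfl | rfl <;> rcases hj with rfl | rfl <;> tauto
  · rintro (⟨h1, h2⟩ | ⟨h1, h2⟩)
    · exact ⟨a, Or.inl rfl, b, Or.inr rfl, h1, h2⟩
    · exact ⟨b, Or.inr rfl, a, Or.inl rfl, h1, h2⟩

open Classical in
lemma spinProd_flipOn (G : SimpleGraph V) [DecidableRel G.Adj]
    (W : Finset V) (σ : V → ℝ) {e : Sym2 V} (he : e ∈ G.edgeFinset) :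
    spinProd (flipOn W σ) e = if e ∈ edgeBdry G W then -spinProd σ e else spinProd σ e := by
  induction e using Sym2.inductionOn with
  | hf a b =>
    simp only [mem_edgeBdry_iff G W he]
    by_cases ha : a ∈ W <;> by_cases hb : b ∈ W <;>
      simp [spinProd, flipOn, ha, hb] <;> ring

open Classical in
lemma ham_flip (G : SimpleGraph V) [DecidableRel G.Adj] (J : Env V) (σ : V → ℝ)
    (W : Finset V) :
    ham G J (flipOn W σ) = ham G J σ + 2 * ∑ e ∈ edgeBdry G W, J e * spinProd σ e := by
  unfold ham
  have hsub : edgeBdry G W ⊆ G.edgeFinset := by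
    unfold edgeBdry; exact Finset.filter_subset _ _
  have h1 : ∀ e ∈ G.edgeFinset, J e * spinProd (flipOn W σ) e
      = J e * spinProd σ e - (if e ∈ edgeBdry G W then 2 * (J e * spinProd σ e) else 0) := by
    intro e he
    rw [spinProd_flipOn G W σ he]
    split <;> ring
  rw [Finset.sum_congr rfl h1, Finset.sum_sub_distrib, Finset.sum_ite_mem,
    Finset.inter_eq_right.mpr hsub, Finset.mul_sum]
  ring

open Classical in
lemma edgeBdry_singleton (G : SimpleGraph V) [DecidableRel G.Adj] (i : V) :
    edgeBdry G ({i} : Finset V) = G.edgeFinset.filter (fun f => i ∈ f) := by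
  unfold edgeBdry
  apply Finset.filter_congr
  intro f hf
  rw [SimpleGraph.mem_edgeFinset] at hf
  induction f using Sym2.inductionOn with
  | hf a b =>
    have hab : a ≠ b := by
      intro h
      exact G.not_isDiag_of_mem_edgeSet hf (by simp [h])
    simp only [Sym2.mem_iff, Finset.mem_singleton]
    constructor
    · rintro ⟨x, hx, y, hy, hxi, hyi⟩
      subst hxi; exact hx
    · intro hi
      rcases hi with h | h
      · exact ⟨a, Or.inl rfl, b, Or.inr rfl, h.symm, fun hb => hab (hb.trans h).symm⟩
      · exact ⟨b, Or.inr rfl, a, Or.inl rfl, h.symm, fun ha2 => hab (ha2.trans h)⟩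

open Classical in
lemma local_field_bound (G : SimpleGraph V) [DecidableRel G.Adj] (J : Env V)
    {τ : V → ℝ} (hτ : IsConfig τ) {e : Sym2 V} (he : e ∈ G.edgeFinset)
    (hspec : (∑ f ∈ G.edgeFinset.filter fun f => edgeNbr e f, |J f|) + 2 < J e)
    {i : V} (hie : i ∈ e) (hsat : spinProd τ e = -1) :
    ∑ f ∈ G.edgeFinset.filter (fun f => i ∈ f), J f * spinProd τ f ≤ -2 := by
  have heM : e ∈ G.edgeFinset.filter (fun f => i ∈ f) := Finset.mem_filter.mpr ⟨he, hie⟩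
  rw [← Finset.add_sum_erase _ _ heM, hsat]
  have hrest : ∑ f ∈ (G.edgeFinset.filter (fun f => i ∈ f)).erase e, J f * spinProd τ f
      ≤ ∑ f ∈ G.edgeFinset.filter (fun f => edgeNbr e f), |J f| := by
    calc ∑ f ∈ (G.edgeFinset.filter (fun f => i ∈ f)).erase e, J f * spinProd τ f
        ≤ ∑ f ∈ (G.edgeFinset.filter (fun f => i ∈ f)).erase e, |J f| := by
          apply Finset.sum_le_sum
          intro f hf
          rcases spinProd_pm hτ f with h | h <;> rw [h]
          · simpa using le_abs_self (J f)
          · rw [mul_neg_one]; exact neg_le_abs (J f)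
      _ ≤ _ := by
          apply Finset.sum_le_sum_of_subset_of_nonneg
          · intro f hf
            simp only [Finset.mem_erase, Finset.mem_filter] at hf ⊢
            exact ⟨hf.2.1, Ne.symm hf.1, i, hie, hf.2.2⟩
          · intro f _ _
            exact abs_nonneg _
  linarith

open Classical in
lemma special_satisfied {G : SimpleGraph V} [DecidableRel G.Adj] {B : Finset V} {γ : V → ℝ}
    {J : Env V} {σ : V → ℝ} (hσ : IsGroundState G B γ J σ)
    {e : Sym2 V} (he : e ∈ G.edgeFinset)
    (hspec : (∑ f ∈ G.edgeFinset.filter fun f => edgeNbr e f, |J f|) + 2 < J e)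
    {i : V} (hie : i ∈ e) (hi : i ∈ univ \ B) :
    spinProd σ e = 1 := by
  rcases spinProd_pm hσ.1 e with h | h
  · exact h
  · exfalso
    have hlf := local_field_bound G J hσ.1 he hspec hie h
    have hflip := ham_flip G J σ ({i} : Finset V)
    rw [edgeBdry_singleton] at hflip
    have hground := hσ.2.2 (flipOn {i} σ) (isConfig_flipOn _ hσ.1)
      (satisfiesBC_flipOn (Finset.singleton_subset_iff.mpr hi) hσ.2.1)
    linarith

lemma sym2_other {G : SimpleGraph V} [DecidableRel G.Adj] :
    ∀ g ∈ G.edgeFinset, ∀ v ∈ g, ∃ w, w ∈ g ∧ w ≠ v ∧ g = s(v, w) := by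
  intro g hg v hv
  have hnd : ¬ g.IsDiag := by
    rw [SimpleGraph.mem_edgeFinset] at hg
    exact G.not_isDiag_of_mem_edgeSet hg
  exact ⟨Sym2.Mem.other hv, Sym2.other_mem hv, Sym2.other_ne hnd hv, (Sym2.other_spec hv).symm⟩

end Aux

open Classical in
/-- the energy cost of overturning `A` is at least twice the number of
special edges in a well-separated subset `K` of `∂A`. -/
theorem special_edges_lower_bound (V : Type) [Fintype V] [DecidableEq V]
    (G : SimpleGraph V) [DecidableRel G.Adj] (B : Finset V) (γ : V → ℝ)
    (hconn : G.Connected) (hE : 2 ≤ G.edgeFinset.card) (hVo : (univ \ B).Nonempty)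
    (hVoconn : (G.induce ((univ \ B : Finset V) : Set V)).Connected)
    (J : Env V) (σ : V → ℝ) (hσ : IsGroundState G B γ J σ)
    (huniq : ∀ τ : V → ℝ, IsGroundState G B γ J τ → τ = σ ∨ τ = fun i => -σ i)
    (A : Finset V) (hA : A ⊆ univ \ B)
    (K : Finset (Sym2 V)) (hK : K ⊆ edgeBdry G A)
    (hsep : ∀ e ∈ K, ∀ f ∈ K, e ≠ f →
      ¬edgeNbr e f ∧ ¬∃ g ∈ G.edgeFinset, edgeNbr e g ∧ edgeNbr f g) :
    2 * ((K.filter fun e =>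
        (∑ f ∈ G.edgeFinset.filter fun f => edgeNbr e f, |J f|) + 2 < J e).card : ℝ) ≤
      ham G J (flipOn A σ) - ham G J σ := by
  classical
  obtain ⟨hconf, hbc, hmin⟩ := hσ
  set Ksp := K.filter (fun e =>
      (∑ f ∈ G.edgeFinset.filter fun f => edgeNbr e f, |J f|) + 2 < J e) with hKspdef
  have hKspK : Ksp ⊆ K := Finset.filter_subset _ _
  have hKE : ∀ e ∈ K, e ∈ G.edgeFinset := by
    intro e heK
    have := hK heK
    unfold edgeBdry at this
    exact (Finset.mem_filter.mp this).1
  -- choose the A-endpoint of each special edge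
  have hpick : ∀ e ∈ Ksp, ∃ i, i ∈ e ∧ i ∈ A ∧ ∃ j ∈ e, j ∉ A := by
    intro e heKsp
    have heK : e ∈ K := hKspK heKsp
    have hb := hK heK
    unfold edgeBdry at hb
    obtain ⟨-, i, hi, j, hj, hiA, hjA⟩ := Finset.mem_filter.mp hb
    exact ⟨i, hi, hiA, j, hj, hjA⟩
  have hVne : Nonempty V := ⟨hVo.choose⟩
  choose! pk hpk_mem hpk_A hpk_out using hpick
  -- no edge of G contains the picked vertices of two distinct special edges
  have hcommon : ∀ e ∈ Ksp, ∀ f ∈ Ksp, e ≠ f → ∀ v, v ∈ e → v ∉ f := by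
    intro e he f hf hne v hv hvf
    exact (hsep e (hKspK he) f (hKspK hf) hne).1 ⟨hne, v, hv, hvf⟩
  have hsepv : ∀ e ∈ Ksp, ∀ f ∈ Ksp, e ≠ f → ∀ g ∈ G.edgeFinset,
      pk e ∈ g → pk f ∈ g → False := by
    intro e he f hf hne g hg hge hgf
    by_cases hgeq : g = e
    · rw [hgeq] at hgf
      exact hcommon e he f hf hne (pk f) hgf (hpk_mem f hf)
    by_cases hgfq : g = f
    · rw [hgfq] at hge
      exact hcommon e he f hf hne (pk e) (hpk_mem e he) hge
    exact (hsep e (hKspK he) f (hKspK hf) hne).2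
      ⟨g, hg, ⟨fun h => hgeq h.symm, pk e, hpk_mem e he, hge⟩,
        ⟨fun h => hgfq h.symm, pk f, hpk_mem f hf, hgf⟩⟩
  -- the edge boundary of the picked set decomposes as a disjoint union
  have hNdef : edgeBdry G (Ksp.image pk)
      = Ksp.biUnion (fun e => G.edgeFinset.filter (fun f => pk e ∈ f)) := by
    ext g
    simp only [Finset.mem_biUnion, Finset.mem_filter]
    constructor
    · intro hg
      unfold edgeBdry at hg
      obtain ⟨hgE, x, hx, y, hy, hxI, hyI⟩ := Finset.mem_filter.mp hg
      obtain ⟨e, he, rfl⟩ := Finset.mem_image.mp hxI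
      exact ⟨e, he, hgE, hx⟩
    · rintro ⟨e, he, hgE, hge⟩
      obtain ⟨w, hw, hwne, hgeq⟩ := sym2_other g hgE (pk e) hge
      have hwI : w ∉ Ksp.image pk := by
        intro hwI
        obtain ⟨f, hf, hyf⟩ := Finset.mem_image.mp hwI
        by_cases hef : f = e
        · exact hwne (by rw [← hyf, hef])
        · exact hsepv e he f hf (fun h => hef h.symm) g hgE hge (by rw [← hyf] at hw; exact hw)
      unfold edgeBdry
      exact Finset.mem_filter.mpr
        ⟨hgE, pk e, hge, w, hw, Finset.mem_image_of_mem pk he, hwI⟩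
  have hdisj : (Ksp : Set (Sym2 V)).PairwiseDisjoint
      (fun e => G.edgeFinset.filter (fun f => pk e ∈ f)) := by
    intro e he f hf hne
    simp only [Function.onFun]
    rw [Finset.disjoint_left]
    intro g hge hgf
    obtain ⟨hgE, hge'⟩ := Finset.mem_filter.mp hge
    obtain ⟨-, hgf'⟩ := Finset.mem_filter.mp hgf
    exact hsepv e (Finset.mem_coe.mp he) f (Finset.mem_coe.mp hf) hne g hgE hge' hgf'
  set τ := flipOn A σ with hτdef
  have hτconf : IsConfig τ := isConfig_flipOn A hconf
  -- each local field at a picked vertex is at most -2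
  have hbound : ∀ e ∈ Ksp,
      ∑ g ∈ G.edgeFinset.filter (fun f => pk e ∈ f), J g * spinProd τ g ≤ -2 := by
    intro e he
    have heE : e ∈ G.edgeFinset := hKE e (hKspK he)
    have hspec : (∑ f ∈ G.edgeFinset.filter fun f => edgeNbr e f, |J f|) + 2 < J e :=
      (Finset.mem_filter.mp he).2
    obtain ⟨j, hj, hjA⟩ := hpk_out e he
    have hiA := hpk_A e he
    obtain ⟨w, hw, hwne, hgeq⟩ := sym2_other e heE (pk e) (hpk_mem e he)
    have hjw : j = w := by
      rw [hgeq, Sym2.mem_iff] at hj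
      rcases hj with h | h
      · exact absurd (h ▸ hiA) hjA
      · exact h
    have hwA : w ∉ A := hjw ▸ hjA
    have hiint : pk e ∈ univ \ B := hA hiA
    have hsatσ : spinProd σ e = 1 :=
      special_satisfied ⟨hconf, hbc, hmin⟩ heE hspec (hpk_mem e he) hiint
    have hsatτ : spinProd τ e = -1 := by
      have ht1 : τ (pk e) = -σ (pk e) := by simp [hτdef, flipOn, hiA]
      have ht2 : τ w = σ w := by simp [hτdef, flipOn, hwA]
      rw [hgeq] at hsatσ ⊢
      simp only [spinProd, Sym2.lift_mk] at hsatσ ⊢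
      rw [ht1, ht2]
      linarith
    exact local_field_bound G J hτconf heE hspec (hpk_mem e he) hsatτ
  have hcard : Ksp.card = (Ksp.image pk).card := by
    rw [Finset.card_image_of_injOn]
    intro e he f hf heq
    by_contra hne
    exact (hsep e (hKspK (Finset.mem_coe.mp he)) f (hKspK (Finset.mem_coe.mp hf)) hne).1
      ⟨hne, pk e, hpk_mem e (Finset.mem_coe.mp he),
        by rw [heq]; exact hpk_mem f (Finset.mem_coe.mp hf)⟩
  have htot : ∑ g ∈ edgeBdry G (Ksp.image pk), J g * spinProd τ g ≤ -2 * Ksp.card := by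
    rw [hNdef, Finset.sum_biUnion hdisj]
    calc ∑ e ∈ Ksp, ∑ g ∈ G.edgeFinset.filter (fun f => pk e ∈ f), J g * spinProd τ g
        ≤ ∑ _e ∈ Ksp, (-2 : ℝ) := Finset.sum_le_sum hbound
      _ = -2 * Ksp.card := by simp [mul_comm]
  have hIsub : Ksp.image pk ⊆ univ \ B := by
    intro v hv
    obtain ⟨e, he, rfl⟩ := Finset.mem_image.mp hv
    exact hA (hpk_A e he)
  have hflip2 := ham_flip G J τ (Ksp.image pk)
  have hg2 := hmin (flipOn (Ksp.image pk) τ) (isConfig_flipOn _ hτconf)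
    (satisfiesBC_flipOn hIsub (satisfiesBC_flipOn hA hbc))
  have hX0 : (0 : ℝ) ≤ (Ksp.card : ℝ) := Nat.cast_nonneg _
  linarith

end EA
end
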